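/- Let (T, Γ) be a Γ-semigroup with zero 0 and let H be a 0-least Γ-two-sided ideal of T. Then either HΓH = {0}, or H is a 0-simple Γ-semigroup, i.e., HΓH ≠ {0} and every nonempty subset B ⊆ H satisfying HΓB ⊆ B and BΓH ⊆ B equals {0} or H. -/

import Mathlib

/-- The set product AΓB = {aγb : a ∈ A, γ ∈ Γ, b ∈ B} for a Γ-semigroup
with multiplication `mul : T → G → T → T`. -/
def gprod {T G : Type*} (mul : T → G → T → T) (A B : Set T) : Set T :=
  {x | ∃ a ∈ A, ∃ γ : G, ∃ b ∈ B, x = mul a γ b}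

/-- A nonempty subset B with TΓB ⊆ B. -/
def IsLeftIdeal {T G : Type*} (mul : T → G → T → T) (B : Set T) : Prop :=
  B.Nonempty ∧ gprod mul Set.univ B ⊆ B

/-- A nonempty subset B with BΓT ⊆ B. -/
def IsRightIdeal {T G : Type*} (mul : T → G → T → T) (B : Set T) : Prop :=
  B.Nonempty ∧ gprod mul B Set.univ ⊆ B

/-- A Γ-two-sided ideal. -/
def IsTwoSidedIdeal {T G : Type*} (mul : T → G → T → T) (B : Set T) : Prop :=
  IsLeftIdeal mul B ∧ IsRightIdeal mul B

/-- z is a zero element: eαz = zαe = z for all e, α. -/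
def IsZero {T G : Type*} (mul : T → G → T → T) (z : T) : Prop :=
  ∀ (e : T) (α : G), mul e α z = z ∧ mul z α e = z

/-- A least Γ-left ideal: every Γ-left ideal contained in it equals it. -/
def IsLeastLeftIdeal {T G : Type*} (mul : T → G → T → T) (H : Set T) : Prop :=
  IsLeftIdeal mul H ∧ ∀ B : Set T, IsLeftIdeal mul B → B ⊆ H → B = H

/-- A least Γ-two-sided ideal. -/
def IsLeastTwoSidedIdeal {T G : Type*} (mul : T → G → T → T) (A : Set T) : Prop :=
  IsTwoSidedIdeal mul A ∧ ∀ B : Set T, IsTwoSidedIdeal mul B → B ⊆ A → B = A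

/-- A 0-least Γ-left ideal. -/
def IsZeroLeastLeftIdeal {T G : Type*} (mul : T → G → T → T) (z : T) (H : Set T) : Prop :=
  IsLeftIdeal mul H ∧ H ≠ {z} ∧
    ∀ B : Set T, IsLeftIdeal mul B → B ⊆ H → B = {z} ∨ B = H

/-- A 0-least Γ-right ideal. -/
def IsZeroLeastRightIdeal {T G : Type*} (mul : T → G → T → T) (z : T) (H : Set T) : Prop :=
  IsRightIdeal mul H ∧ H ≠ {z} ∧
    ∀ B : Set T, IsRightIdeal mul B → B ⊆ H → B = {z} ∨ B = H

/-- A 0-least Γ-two-sided ideal. -/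
def IsZeroLeastTwoSidedIdeal {T G : Type*} (mul : T → G → T → T) (z : T) (H : Set T) : Prop :=
  IsTwoSidedIdeal mul H ∧ H ≠ {z} ∧
    ∀ B : Set T, IsTwoSidedIdeal mul B → B ⊆ H → B = {z} ∨ B = H

/-- 0-simple: TΓT ≠ {0} and the only Γ-two-sided ideals are {0} and T. -/
def IsZeroSimple {T G : Type*} (mul : T → G → T → T) (z : T) : Prop :=
  gprod mul Set.univ Set.univ ≠ {z} ∧
    ∀ B : Set T, IsTwoSidedIdeal mul B → B = {z} ∨ B = Set.univ

/-- e is an idempotent: eαe = e for some α. -/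
def IsIdempotent {T G : Type*} (mul : T → G → T → T) (e : T) : Prop :=
  ∃ α : G, mul e α e = e

/-- The partial order on idempotents: e ≤ f iff exf = fye = e for some x, y ∈ Γ. -/
def IdemLe {T G : Type*} (mul : T → G → T → T) (e f : T) : Prop :=
  ∃ x y : G, mul e x f = e ∧ mul f y e = e

/-- A primitive idempotent: nonzero, and minimal among nonzero idempotents. -/
def IsPrimitiveIdempotent {T G : Type*} (mul : T → G → T → T) (z e : T) : Prop :=
  e ≠ z ∧ IsIdempotent mul e ∧
    ∀ f : T, f ≠ z → IsIdempotent mul f → IdemLe mul f e → f = e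

/-- Completely 0-simple: 0-simple with a primitive idempotent. -/
def IsCompletelyZeroSimple {T G : Type*} (mul : T → G → T → T) (z : T) : Prop :=
  IsZeroSimple mul z ∧ ∃ e : T, IsPrimitiveIdempotent mul z e

/-- Green's relation L: e L f iff {e} ∪ TΓe = {f} ∪ TΓf. -/
def LRel {T G : Type*} (mul : T → G → T → T) (e f : T) : Prop :=
  insert e (gprod mul Set.univ {e}) = insert f (gprod mul Set.univ {f})

/-- Green's relation R: e R f iff {e} ∪ eΓT = {f} ∪ fΓT. -/
def RRel {T G : Type*} (mul : T → G → T → T) (e f : T) : Prop :=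
  insert e (gprod mul {e} Set.univ) = insert f (gprod mul {f} Set.univ)

/-- Green's relation D = L ∘ R. -/
def DRel {T G : Type*} (mul : T → G → T → T) (e f : T) : Prop :=
  ∃ c : T, LRel mul e c ∧ RRel mul c f

/-- The Γ-two-sided ideal generated by e: {e} ∪ TΓe ∪ eΓT ∪ TΓeΓT. -/
def GenTwo {T G : Type*} (mul : T → G → T → T) (e : T) : Set T :=
  {e} ∪ gprod mul Set.univ {e} ∪ gprod mul {e} Set.univ ∪
    gprod mul (gprod mul Set.univ {e}) Set.univ

/-- A Γ-prime ideal. -/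
def IsPrimeIdeal {T G : Type*} (mul : T → G → T → T) (Q : Set T) : Prop :=
  IsTwoSidedIdeal mul Q ∧
    ∀ E F : Set T, IsTwoSidedIdeal mul E → IsTwoSidedIdeal mul F →
      gprod mul E F ⊆ Q → E ⊆ Q ∨ F ⊆ Q

/-- A Γ-two-sided ideal of the Γ-semigroup H (a subset of T closed as an ideal of H). -/
def IsTwoSidedIdealIn {T G : Type*} (mul : T → G → T → T) (H B : Set T) : Prop :=
  B.Nonempty ∧ B ⊆ H ∧ gprod mul H B ⊆ B ∧ gprod mul B H ⊆ B

/-! If `HΓH ≠ {0}`, then `HΓH` is an ideal of `T` inside `H`, hence `HΓH = H`. For an ideal `B` of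
the Γ-semigroup `H`, `HΓBΓH` is an ideal of `T` inside `B`, so it is `{0}` or `H`. If it is `H`,
then `B = H`. If it is `{0}`, then `B` lies in the ideal `{a ∈ H | HΓaΓH = {0}}` of `T`; this ideal
is not `H`, since otherwise `H = HΓHΓH = {0}`, so it is `{0}`, and so is `B`. -/

section GammaSemigroup

variable {T G : Type*} {mul : T → G → T → T}

def GammaAssociative (mul : T → G → T → T) : Prop :=
  ∀ (e f g : T) (α β : G), mul (mul e α f) β g = mul e α (mul f β g)

theorem mul_mem_gprod {A B : Set T} {a b : T} (ha : a ∈ A) (hb : b ∈ B) (γ : G) :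
    mul a γ b ∈ gprod mul A B :=
  ⟨a, ha, γ, b, hb, rfl⟩

theorem gprod_subset_iff {A B C : Set T} :
    gprod mul A B ⊆ C ↔ ∀ a ∈ A, ∀ γ : G, ∀ b ∈ B, mul a γ b ∈ C := by
  constructor
  · exact fun h a ha γ b hb => h (mul_mem_gprod ha hb γ)
  · rintro h _ ⟨a, ha, γ, b, hb, rfl⟩
    exact h a ha γ b hb

theorem gprod_mono {A A' B B' : Set T} (hA : A ⊆ A') (hB : B ⊆ B') :
    gprod mul A B ⊆ gprod mul A' B' :=
  gprod_subset_iff.2 fun _ ha γ _ hb => mul_mem_gprod (hA ha) (hB hb) γ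

theorem Set.Nonempty.gprod [Nonempty G] {A B : Set T} (hA : A.Nonempty) (hB : B.Nonempty) :
    (gprod mul A B).Nonempty :=
  ⟨_, mul_mem_gprod hA.some_mem hB.some_mem (Classical.arbitrary G)⟩

theorem IsLeftIdeal.gprod_subset {A B : Set T} (hB : IsLeftIdeal mul B) : gprod mul A B ⊆ B :=
  (gprod_mono (Set.subset_univ A) le_rfl).trans hB.2

theorem IsZero.mem_of_isLeftIdeal [Nonempty G] {z : T} (hz : IsZero mul z) {B : Set T}
    (hB : IsLeftIdeal mul B) : z ∈ B := by
  obtain ⟨b, hb⟩ := hB.1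
  obtain ⟨γ⟩ := ‹Nonempty G›
  simpa only [(hz b γ).2] using hB.2 (mul_mem_gprod (Set.mem_univ z) hb γ)

theorem IsLeftIdeal.gprod [Nonempty G] (assoc : GammaAssociative mul) {A B : Set T}
    (hA : IsLeftIdeal mul A) (hB : B.Nonempty) : IsLeftIdeal mul (gprod mul A B) := by
  refine ⟨hA.1.gprod hB, gprod_subset_iff.2 ?_⟩
  rintro t - α _ ⟨a, ha, γ, b, hb, rfl⟩
  rw [← assoc]
  exact mul_mem_gprod (hA.2 (mul_mem_gprod (Set.mem_univ t) ha α)) hb γ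

theorem IsRightIdeal.gprod [Nonempty G] (assoc : GammaAssociative mul) {A B : Set T}
    (hA : A.Nonempty) (hB : IsRightIdeal mul B) : IsRightIdeal mul (gprod mul A B) := by
  refine ⟨hA.gprod hB.1, gprod_subset_iff.2 ?_⟩
  rintro _ ⟨a, ha, γ, b, hb, rfl⟩ α t -
  rw [assoc]
  exact mul_mem_gprod ha (hB.2 (mul_mem_gprod hb (Set.mem_univ t) α)) γ

theorem isTwoSidedIdeal_gprod [Nonempty G] (assoc : GammaAssociative mul) {A B : Set T}
    (hA : IsLeftIdeal mul A) (hB : IsRightIdeal mul B) : IsTwoSidedIdeal mul (gprod mul A B) :=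
  ⟨hA.gprod assoc hB.1, hB.gprod assoc hA.1⟩

def sandwichAnnihilator (mul : T → G → T → T) (z : T) (H : Set T) : Set T :=
  {a | a ∈ H ∧ ∀ h ∈ H, ∀ h' ∈ H, ∀ γ δ : G, mul (mul h γ a) δ h' = z}

theorem subset_sandwichAnnihilator_iff {z : T} {H B : Set T} :
    B ⊆ sandwichAnnihilator mul z H ↔ B ⊆ H ∧ gprod mul (gprod mul H B) H ⊆ {z} := by
  constructor
  · intro hB
    refine ⟨fun b hb => (hB hb).1, gprod_subset_iff.2 ?_⟩
    rintro _ ⟨h, hh, γ, b, hb, rfl⟩ δ h' hh'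
    exact (hB hb).2 h hh h' hh' γ δ
  · rintro ⟨hBH, hK⟩ b hb
    exact ⟨hBH hb, fun h hh h' hh' γ δ => hK (mul_mem_gprod (mul_mem_gprod hh hb γ) hh' δ)⟩

theorem isTwoSidedIdeal_sandwichAnnihilator [Nonempty G] (assoc : GammaAssociative mul)
    {z : T} (hz : IsZero mul z) {H : Set T} (hH : IsTwoSidedIdeal mul H) :
    IsTwoSidedIdeal mul (sandwichAnnihilator mul z H) := by
  have hzZ : z ∈ sandwichAnnihilator mul z H :=
    ⟨hz.mem_of_isLeftIdeal hH.1, fun h _ h' _ γ δ => by rw [(hz h γ).1, (hz h' δ).2]⟩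
  refine ⟨⟨⟨z, hzZ⟩, gprod_subset_iff.2 ?_⟩, ⟨⟨z, hzZ⟩, gprod_subset_iff.2 ?_⟩⟩
  · rintro t - α a ⟨ha, hann⟩
    refine ⟨hH.1.2 (mul_mem_gprod (Set.mem_univ t) ha α), fun h hh h' hh' γ δ => ?_⟩
    rw [← assoc]
    exact hann _ (hH.2.2 (mul_mem_gprod hh (Set.mem_univ t) γ)) h' hh' α δ
  · rintro a ⟨ha, hann⟩ α t -
    refine ⟨hH.2.2 (mul_mem_gprod ha (Set.mem_univ t) α), fun h hh h' hh' γ δ => ?_⟩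
    rw [← assoc, assoc _ _ _ α]
    exact hann h hh _ (hH.1.2 (mul_mem_gprod (Set.mem_univ t) hh' δ)) γ α

end GammaSemigroup

namespace IsZeroLeastTwoSidedIdeal

variable {T G : Type*} [Nonempty G] {mul : T → G → T → T} {z : T} {H : Set T}

theorem gprod_self_eq (assoc : GammaAssociative mul) (hH : IsZeroLeastTwoSidedIdeal mul z H)
    (hHH : gprod mul H H ≠ {z}) : gprod mul H H = H :=
  (hH.2.2 _ (isTwoSidedIdeal_gprod assoc hH.1.1 hH.1.2) hH.1.1.gprod_subset).resolve_left hHH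

theorem eq_zero_or_eq_of_isTwoSidedIdealIn (assoc : GammaAssociative mul) (hz : IsZero mul z)
    (hH : IsZeroLeastTwoSidedIdeal mul z H) (hHH : gprod mul H H = H) {B : Set T}
    (hBideal : IsTwoSidedIdealIn mul H B) : B = {z} ∨ B = H := by
  obtain ⟨hHideal, hHz, hHmin⟩ := hH
  obtain ⟨hB, hBH, hHB, hBH'⟩ := hBideal
  have hKB : gprod mul (gprod mul H B) H ⊆ B := (gprod_mono hHB le_rfl).trans hBH'
  have hKideal : IsTwoSidedIdeal mul (gprod mul (gprod mul H B) H) :=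
    isTwoSidedIdeal_gprod assoc (hHideal.1.gprod assoc hB) hHideal.2
  rcases hHmin _ hKideal (hKB.trans hBH) with hK | hK
  · have hBZ := subset_sandwichAnnihilator_iff.2 ⟨hBH, hK.le⟩
    rcases hHmin _ (isTwoSidedIdeal_sandwichAnnihilator assoc hz hHideal) fun _ ha => ha.1
      with hZ | hZ
    · exact Or.inl (hB.subset_singleton_iff.1 (hZ ▸ hBZ))
    · have hHHH := (subset_sandwichAnnihilator_iff.1 hZ.ge).2
      rw [hHH, hHH] at hHHH
      exact absurd (hHideal.1.1.subset_singleton_iff.1 hHHH) hHz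
  · exact Or.inr (hBH.antisymm (hK ▸ hKB))

end IsZeroLeastTwoSidedIdeal

theorem zeroLeastTwoSidedIdeal_zero_or_zeroSimple_general {T G : Type*} [Nonempty G]
    (mul : T → G → T → T)
    (assoc : ∀ (e f g : T) (α β : G), mul (mul e α f) β g = mul e α (mul f β g))
    (z : T) (hz : IsZero mul z)
    (H : Set T) (hH : IsZeroLeastTwoSidedIdeal mul z H) :
    gprod mul H H = {z} ∨
      (gprod mul H H ≠ {z} ∧
        ∀ B : Set T, B ⊆ H → B.Nonempty →
          gprod mul H B ⊆ B → gprod mul B H ⊆ B → B = {z} ∨ B = H) := by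
  by_cases hHH : gprod mul H H = {z}
  · exact Or.inl hHH
  exact Or.inr ⟨hHH, fun B hBH hB hHB hBH' =>
    hH.eq_zero_or_eq_of_isTwoSidedIdealIn assoc hz (hH.gprod_self_eq assoc hHH) ⟨hB, hBH, hHB, hBH'⟩⟩

theorem zeroLeastTwoSidedIdeal_zero_or_zeroSimple {T G : Type*} [Nonempty T] [Nonempty G]
    (mul : T → G → T → T)
    (assoc : ∀ (e f g : T) (α β : G), mul (mul e α f) β g = mul e α (mul f β g))
    (z : T) (hz : IsZero mul z)
    (H : Set T) (hH : IsZeroLeastTwoSidedIdeal mul z H) :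
    gprod mul H H = {z} ∨
      (gprod mul H H ≠ {z} ∧
        ∀ B : Set T, B ⊆ H → B.Nonempty →
          gprod mul H B ⊆ B → gprod mul B H ⊆ B → B = {z} ∨ B = H) :=
  zeroLeastTwoSidedIdeal_zero_or_zeroSimple_general mul assoc z hz H hH
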